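/- Let d ≥ 1 and σ > 0. Define the Hermite heat kernel G_t(x,y) = (2π sinh(2t))^{-d/2} exp(-(1/4)[tanh(t)‖x+y‖² + coth(t)‖x−y‖²]) for x, y ∈ ℝ^d, t > 0. Then the potential kernel K^σ(x,y) = Γ(σ)^{-1} ∫_0^∞ G_t(x,y) t^{σ-1} dt satisfies K^σ(x,y) ≤ C exp(-‖x−y‖²/8) whenever ‖x−y‖ ≥ 1, with a constant C depending only on d and σ. -/

import Mathlib

/-! Since `coth t ≥ 1` and `‖x - y‖ ≥ 1`, the exponent of `G_t(x, y)` satisfies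
`coth t ‖x - y‖² / 4 ≥ ‖x - y‖² / 8 + coth t / 8`, so `G_t(x, y) ≤ e^{-‖x - y‖²/8} E(t)` for
an envelope `E` that no longer depends on `x, y`. It remains to integrate `E(t) t^{σ-1}` over
`(0, ∞)`: near `0` the factor `e^{-coth t / 8} ≤ e^{-1/(8t)}` kills the singularity of
`(sinh 2t)^{-d/2}`, and at infinity `(sinh 2t)^{-d/2}` decays like `e^{-dt}`. -/

open MeasureTheory Real Set
open scoped Nat

/-- The Hermite heat kernel on ℝ^d. -/
noncomputable def hermiteHeatKernel (d : ℕ) (t : ℝ) (x y : EuclideanSpace ℝ (Fin d)) : ℝ :=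
  (2 * Real.pi * Real.sinh (2 * t)) ^ (-(d : ℝ) / 2) *
    Real.exp (-(1 / 4) * (Real.tanh t * ‖x + y‖ ^ 2 +
      (Real.cosh t / Real.sinh t) * ‖x - y‖ ^ 2))

namespace Real

lemma sinh_le_mul_cosh {t : ℝ} (ht : 0 ≤ t) : sinh t ≤ t * cosh t := by
  have hderiv (s : ℝ) : HasDerivAt (fun s ↦ s * cosh s - sinh s) (s * sinh s) s :=
    (((hasDerivAt_id s).mul (hasDerivAt_cosh s)).sub (hasDerivAt_sinh s)).congr_deriv (by simp)
  have hmono : MonotoneOn (fun s ↦ s * cosh s - sinh s) (Ici 0) :=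
    monotoneOn_of_hasDerivWithinAt_nonneg (convex_Ici 0)
      (fun s _ ↦ (hderiv s).continuousAt.continuousWithinAt)
      (fun s _ ↦ (hderiv s).hasDerivWithinAt)
      (fun s hs ↦ by
        rw [interior_Ici] at hs
        exact mul_nonneg hs.le (sinh_nonneg_iff.2 hs.le))
  simpa using hmono self_mem_Ici ht ht

lemma one_le_cosh_div_sinh {t : ℝ} (ht : 0 < t) : 1 ≤ cosh t / sinh t :=
  (one_le_div (sinh_pos_iff.2 ht)).2 (sinh_lt_cosh t).le

lemma inv_le_cosh_div_sinh {t : ℝ} (ht : 0 < t) : t⁻¹ ≤ cosh t / sinh t := by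
  rw [inv_eq_one_div, div_le_div_iff₀ ht (sinh_pos_iff.2 ht)]
  simpa [mul_comm] using sinh_le_mul_cosh ht.le

lemma exp_div_four_le_sinh {t : ℝ} (ht : 1 / 2 ≤ t) : exp t / 4 ≤ sinh t := by
  have h2t : 2 ≤ exp (2 * t) := by linarith [add_one_le_exp (2 * t)]
  have hprod : exp (-t) * exp t = 1 := by rw [← exp_add]; simp
  have hsq : exp t * exp t = exp (2 * t) := by rw [← exp_add]; ring_nf
  rw [sinh_eq]
  nlinarith [exp_pos t, exp_pos (-t)]

lemma exp_neg_inv_le_factorial_mul_pow {t : ℝ} (ht : 0 < t) (n : ℕ) :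
    exp (-t⁻¹) ≤ n ! * t ^ n := by
  have h := pow_div_factorial_le_exp t⁻¹ (inv_nonneg.2 ht.le) n
  rw [exp_neg]
  calc (exp t⁻¹)⁻¹ ≤ (t⁻¹ ^ n / n !)⁻¹ := inv_anti₀ (by positivity) h
    _ = n ! * t ^ n := by rw [inv_div, inv_pow, div_inv_eq_mul]

end Real

noncomputable def hermiteEnvelope (d : ℕ) (t : ℝ) : ℝ :=
  (2 * π * sinh (2 * t)) ^ (-(d : ℝ) / 2) * exp (-(cosh t / sinh t) / 8)

section HermiteEnvelope

variable {d : ℕ} {t : ℝ}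

lemma hermiteEnvelope_nonneg (ht : 0 ≤ t) : 0 ≤ hermiteEnvelope d t := by
  have : 0 ≤ sinh (2 * t) := sinh_nonneg_iff.2 (by linarith)
  unfold hermiteEnvelope
  positivity

lemma continuousOn_hermiteEnvelope : ContinuousOn (hermiteEnvelope d) (Ioi 0) := by
  have hsinh : ∀ t ∈ Ioi (0 : ℝ), 0 < sinh t := fun t ht ↦ sinh_pos_iff.2 ht
  refine ContinuousOn.mul ?_ ?_
  · refine ContinuousOn.rpow_const (by fun_prop) fun t ht ↦ Or.inl ?_
    have := hsinh (2 * t) (by simp only [mem_Ioi] at ht ⊢; linarith)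
    positivity
  · exact (continuous_cosh.continuousOn.div continuous_sinh.continuousOn
      fun t ht ↦ (hsinh t ht).ne').neg.div_const 8 |>.rexp

lemma hermiteEnvelope_le_of_le_one (ht0 : 0 < t) (ht1 : t ≤ 1) :
    hermiteEnvelope d t ≤ d ! * 8 ^ d := by
  have hsing : (2 * π * sinh (2 * t)) ^ (-(d : ℝ) / 2) ≤ t ^ (-(d : ℝ) / 2) := by
    refine rpow_le_rpow_of_nonpos ht0 ?_ (by rw [neg_div]; exact neg_nonpos.2 (by positivity))
    nlinarith [self_lt_sinh_iff.2 (by linarith : 0 < 2 * t), pi_gt_three]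
  have hdecay : exp (-(cosh t / sinh t) / 8) ≤ d ! * (8 * t) ^ d :=
    calc exp (-(cosh t / sinh t) / 8) ≤ exp (-(8 * t)⁻¹) := by
          rw [exp_le_exp, mul_inv]
          linarith [inv_le_cosh_div_sinh ht0]
      _ ≤ d ! * (8 * t) ^ d := exp_neg_inv_le_factorial_mul_pow (by positivity) d
  have hpow : t ^ (-(d : ℝ) / 2) * t ^ d = t ^ ((d : ℝ) / 2) := by
    rw [← rpow_natCast, ← rpow_add ht0]
    ring_nf
  calc hermiteEnvelope d t ≤ t ^ (-(d : ℝ) / 2) * (d ! * (8 * t) ^ d) :=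
        mul_le_mul hsing hdecay (exp_nonneg _) (rpow_nonneg ht0.le _)
    _ = d ! * 8 ^ d * t ^ ((d : ℝ) / 2) := by rw [← hpow, mul_pow]; ring
    _ ≤ d ! * 8 ^ d :=
        mul_le_of_le_one_right (by positivity) (rpow_le_one ht0.le ht1 (by positivity))

lemma hermiteEnvelope_le_of_one_le (hd : 1 ≤ d) (ht : 1 ≤ t) :
    hermiteEnvelope d t ≤ (π / 2) ^ (-(d : ℝ) / 2) * exp (-t) := by
  have hneg : -(d : ℝ) / 2 ≤ 0 := by rw [neg_div]; exact neg_nonpos.2 (by positivity)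
  have hsinh : π / 2 * exp (2 * t) ≤ 2 * π * sinh (2 * t) := by
    nlinarith [exp_div_four_le_sinh (by linarith : 1 / 2 ≤ 2 * t), pi_pos]
  have hexp : exp (2 * t) ^ (-(d : ℝ) / 2) ≤ exp (-t) := by
    rw [← exp_mul, exp_le_exp]
    nlinarith [(Nat.one_le_cast (α := ℝ)).2 hd]
  calc hermiteEnvelope d t ≤ (2 * π * sinh (2 * t)) ^ (-(d : ℝ) / 2) := by
        refine mul_le_of_le_one_right (rpow_nonneg (by positivity) _) (exp_le_one_iff.2 ?_)
        linarith [one_le_cosh_div_sinh (by linarith : 0 < t)]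
    _ ≤ (π / 2 * exp (2 * t)) ^ (-(d : ℝ) / 2) :=
        rpow_le_rpow_of_nonpos (by positivity) hsinh hneg
    _ = (π / 2) ^ (-(d : ℝ) / 2) * exp (2 * t) ^ (-(d : ℝ) / 2) :=
        mul_rpow (by positivity) (exp_nonneg _)
    _ ≤ (π / 2) ^ (-(d : ℝ) / 2) * exp (-t) := by gcongr

lemma integrableOn_hermiteEnvelope_mul_rpow (hd : 1 ≤ d) {σ : ℝ} (hσ : 0 < σ) :
    IntegrableOn (fun t ↦ hermiteEnvelope d t * t ^ (σ - 1)) (Ioi 0) := by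
  have hcont : ContinuousOn (fun t ↦ hermiteEnvelope d t * t ^ (σ - 1)) (Ioi 0) :=
    continuousOn_hermiteEnvelope.mul
      (continuousOn_id.rpow_const fun t ht ↦ Or.inl (ne_of_gt ht))
  have hnorm {t : ℝ} (ht : 0 < t) :
      ‖hermiteEnvelope d t * t ^ (σ - 1)‖ = hermiteEnvelope d t * t ^ (σ - 1) :=
    norm_of_nonneg (mul_nonneg (hermiteEnvelope_nonneg ht.le) (rpow_nonneg ht.le _))
  rw [← Ioc_union_Ioi_eq_Ioi zero_le_one]
  refine IntegrableOn.union ?_ ?_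
  · have hdom : IntegrableOn (fun t : ℝ ↦ (d ! * 8 ^ d : ℝ) * t ^ (σ - 1)) (Ioc 0 1) :=
      ((intervalIntegral.intervalIntegrable_rpow' (by linarith)).1).const_mul _
    refine hdom.mono' (hcont.mono Ioc_subset_Ioi_self |>.aestronglyMeasurable measurableSet_Ioc)
      (ae_restrict_of_forall_mem measurableSet_Ioc fun t ⟨ht0, ht1⟩ ↦ ?_)
    rw [hnorm ht0]
    exact mul_le_mul_of_nonneg_right (hermiteEnvelope_le_of_le_one ht0 ht1) (rpow_nonneg ht0.le _)
  · have hdom : IntegrableOn (fun t ↦ (π / 2) ^ (-(d : ℝ) / 2) * (exp (-t) * t ^ (σ - 1)))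
        (Ioi 1) :=
      ((GammaIntegral_convergent hσ).mono_set (Ioi_subset_Ioi zero_le_one)).const_mul _
    refine hdom.mono' (hcont.mono (Ioi_subset_Ioi zero_le_one) |>.aestronglyMeasurable
      measurableSet_Ioi) (ae_restrict_of_forall_mem measurableSet_Ioi fun t (ht : 1 < t) ↦ ?_)
    rw [hnorm (by linarith), ← mul_assoc]
    exact mul_le_mul_of_nonneg_right (hermiteEnvelope_le_of_one_le hd ht.le)
      (rpow_nonneg (by linarith) _)

end HermiteEnvelope

section HermiteHeatKernel

variable {d : ℕ} {t : ℝ} {x y : EuclideanSpace ℝ (Fin d)}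

lemma hermiteHeatKernel_nonneg (ht : 0 ≤ t) : 0 ≤ hermiteHeatKernel d t x y := by
  have : 0 ≤ sinh (2 * t) := sinh_nonneg_iff.2 (by linarith)
  unfold hermiteHeatKernel
  positivity

lemma hermiteHeatKernel_le_exp_mul_hermiteEnvelope (ht : 0 < t) (hxy : 1 ≤ ‖x - y‖) :
    hermiteHeatKernel d t x y ≤ exp (-‖x - y‖ ^ 2 / 8) * hermiteEnvelope d t := by
  have hcoth := one_le_cosh_div_sinh ht
  have hr : 1 ≤ ‖x - y‖ ^ 2 := one_le_pow₀ hxy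
  have htanh : 0 ≤ tanh t * ‖x + y‖ ^ 2 := by
    rw [tanh_eq_sinh_div_cosh]
    have := sinh_pos_iff.2 ht
    positivity
  have hexp : exp (-(1 / 4) * (tanh t * ‖x + y‖ ^ 2 + cosh t / sinh t * ‖x - y‖ ^ 2))
      ≤ exp (-‖x - y‖ ^ 2 / 8) * exp (-(cosh t / sinh t) / 8) := by
    rw [← exp_add, exp_le_exp]
    nlinarith [mul_nonneg (sub_nonneg.2 hcoth) (sub_nonneg.2 hr)]
  have : 0 ≤ sinh (2 * t) := sinh_nonneg_iff.2 (by linarith)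
  calc hermiteHeatKernel d t x y
      ≤ (2 * π * sinh (2 * t)) ^ (-(d : ℝ) / 2) *
          (exp (-‖x - y‖ ^ 2 / 8) * exp (-(cosh t / sinh t) / 8)) :=
        mul_le_mul_of_nonneg_left hexp (by positivity)
    _ = exp (-‖x - y‖ ^ 2 / 8) * hermiteEnvelope d t := by unfold hermiteEnvelope; ring

end HermiteHeatKernel

theorem stmt_5 (d : ℕ) (hd : 1 ≤ d) (σ : ℝ) (hσ : 0 < σ) :
    ∃ C > 0, ∀ x y : EuclideanSpace ℝ (Fin d), 1 ≤ ‖x - y‖ →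
      (Real.Gamma σ)⁻¹ *
        (∫ t in Set.Ioi (0:ℝ), hermiteHeatKernel d t x y * t ^ (σ - 1)) ≤
      C * Real.exp (-‖x - y‖ ^ 2 / 8) := by
  set I := ∫ t in Ioi (0 : ℝ), hermiteEnvelope d t * t ^ (σ - 1)
  have hI : 0 ≤ I := setIntegral_nonneg measurableSet_Ioi fun t (ht : 0 < t) ↦
    mul_nonneg (hermiteEnvelope_nonneg ht.le) (rpow_nonneg ht.le _)
  have hΓ : 0 ≤ (Gamma σ)⁻¹ := inv_nonneg.2 (Gamma_pos_of_pos hσ).le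
  refine ⟨(Gamma σ)⁻¹ * I + 1, by positivity, fun x y hxy ↦ ?_⟩
  have hK : ∫ t in Ioi 0, hermiteHeatKernel d t x y * t ^ (σ - 1) ≤
      exp (-‖x - y‖ ^ 2 / 8) * I := by
    rw [← integral_const_mul]
    refine integral_mono_of_nonneg
      (ae_restrict_of_forall_mem measurableSet_Ioi fun t (ht : 0 < t) ↦
        mul_nonneg (hermiteHeatKernel_nonneg ht.le) (rpow_nonneg ht.le _))
      ((integrableOn_hermiteEnvelope_mul_rpow hd hσ).const_mul _)
      (ae_restrict_of_forall_mem measurableSet_Ioi fun t (ht : 0 < t) ↦ ?_)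
    dsimp only
    rw [← mul_assoc]
    exact mul_le_mul_of_nonneg_right (hermiteHeatKernel_le_exp_mul_hermiteEnvelope ht hxy)
      (rpow_nonneg ht.le _)
  calc (Gamma σ)⁻¹ * ∫ t in Ioi 0, hermiteHeatKernel d t x y * t ^ (σ - 1)
      ≤ (Gamma σ)⁻¹ * (exp (-‖x - y‖ ^ 2 / 8) * I) := mul_le_mul_of_nonneg_left hK hΓ
    _ ≤ ((Gamma σ)⁻¹ * I + 1) * exp (-‖x - y‖ ^ 2 / 8) := by
        nlinarith [exp_pos (-‖x - y‖ ^ 2 / 8)]
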